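/- Let n ∈ ℕ, let p_t, p_s ∈ [0,1] with p_t < 1, let σ ∈ [0,1], and set β = (p_s - (1-σ)·p_t)/(1 - p_t); assume β ∈ [0,1]. If X ~ Binomial(n, p_t), and conditionally on X = x one draws independently N ~ Binomial(x, 1-σ) and B ~ Binomial(n - x, β), then N + B ~ Binomial(n, p_s). -/

import Mathlib

/-- The binomial probability mass function `b(n,p,k) = C(n,k)·p^k·(1-p)^(n-k)`. -/
def binomialPMF (n : ℕ) (p : ℝ) (k : ℕ) : ℝ :=
  (n.choose k : ℝ) * p ^ k * (1 - p) ^ (n - k)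

/-!
The probability generating function of `Binomial(m, p)` is `(p X + (1 - p))^m`. Conditionally on
`X = x`, the generating function of `N + B` is `P_{1-σ}^x · P_β^(n-x)` with `P_q = q X + (1 - q)`;
averaging over `X ~ Binomial(n, p_t)` gives, by the binomial theorem, `(p_t P_{1-σ} + (1 - p_t) P_β)^n`,
and this is `P_q^n` with `q = p_t (1 - σ) + (1 - p_t) β`, which the choice of `β` makes equal to `p_s`.
-/

open Polynomial Finset

lemma binomialPMF_eq_zero_of_lt {n k : ℕ} (p : ℝ) (h : n < k) : binomialPMF n p k = 0 := by
  simp [binomialPMF, Nat.choose_eq_zero_of_lt h]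

lemma coeff_C_mul_add_C_mul_one_sub_pow (p : ℝ) (A B : ℝ[X]) (n k : ℕ) :
    ((C p * A + C (1 - p) * B) ^ n).coeff k
      = ∑ x ∈ range (n + 1), binomialPMF n p x * (A ^ x * B ^ (n - x)).coeff k := by
  rw [add_pow, finsetSum_coeff]
  refine sum_congr rfl fun x _ => ?_
  rw [binomialPMF, ← coeff_C_mul, C_mul, C_mul, C_pow, C_pow, C_eq_natCast]
  congr 1
  ring

noncomputable def binomialPGF (p : ℝ) : ℝ[X] := C p * X + C (1 - p)

lemma coeff_binomialPGF_pow (p : ℝ) (n k : ℕ) :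
    ((binomialPGF p) ^ n).coeff k = binomialPMF n p k := by
  have h := coeff_C_mul_add_C_mul_one_sub_pow p X 1 n k
  simp only [mul_one, one_pow, coeff_X_pow, mul_ite, mul_zero, sum_ite_eq] at h
  rw [binomialPGF, h]
  split_ifs with hk
  · rfl
  · exact (binomialPMF_eq_zero_of_lt p (by simpa using hk)).symm

lemma sum_binomialPMF_mul_binomialPMF_eq_coeff (a b : ℝ) (x y k : ℕ) :
    ∑ j ∈ range (k + 1), binomialPMF x a j * binomialPMF y b (k - j)
      = (binomialPGF a ^ x * binomialPGF b ^ y).coeff k := by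
  rw [coeff_mul, Nat.sum_antidiagonal_eq_sum_range_succ_mk]
  simp only [coeff_binomialPGF_pow]

lemma binomialPGF_mix (q a b : ℝ) :
    binomialPGF (q * a + (1 - q) * b) = C q * binomialPGF a + C (1 - q) * binomialPGF b := by
  simp only [binomialPGF, map_add, map_mul, map_sub, map_one]
  ring

lemma sum_binomialPMF_mul_sum_binomialPMF_mul_binomialPMF (n : ℕ) (q a b : ℝ) (k : ℕ) :
    ∑ x ∈ range (n + 1), binomialPMF n q x *
        ∑ j ∈ range (k + 1), binomialPMF x a j * binomialPMF (n - x) b (k - j)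
      = binomialPMF n (q * a + (1 - q) * b) k := by
  simp only [sum_binomialPMF_mul_binomialPMF_eq_coeff]
  rw [← coeff_binomialPGF_pow, binomialPGF_mix, coeff_C_mul_add_C_mul_one_sub_pow]

theorem attrition_step_preserves_binomial_marginal_general
    (n : ℕ) (pt ps σ : ℝ)
    (hpt1 : pt < 1)
    (β : ℝ) (hβdef : β = (ps - (1 - σ) * pt) / (1 - pt)) :
    ∀ k : ℕ,
      ∑ x ∈ Finset.range (n + 1), binomialPMF n pt x *
        ∑ j ∈ Finset.range (k + 1),
          binomialPMF x (1 - σ) j * binomialPMF (n - x) β (k - j)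
        = binomialPMF n ps k := by
  intro k
  have hmix : pt * (1 - σ) + (1 - pt) * β = ps := by
    rw [hβdef, mul_div_cancel₀ _ (sub_ne_zero.mpr hpt1.ne')]
    ring
  rw [sum_binomialPMF_mul_sum_binomialPMF_mul_binomialPMF, hmix]

/-- **Reverse step with attrition preserves binomial marginals.**
Let `n ∈ ℕ`, `p_t, p_s ∈ [0,1]` with `p_t < 1`, `σ ∈ [0,1]`, and
`β = (p_s - (1-σ)·p_t)/(1 - p_t)` with `β ∈ [0,1]`.  If `X ~ Binomial(n, p_t)` and,
conditionally on `X = x`, independently `N ~ Binomial(x, 1-σ)` and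
`B ~ Binomial(n - x, β)`, then `N + B ~ Binomial(n, p_s)`: as probability mass
functions, for every `k`,
`Σ_x P(X=x) · Σ_j P(N=j)·P(B=k-j) = C(n,k)·p_s^k·(1-p_s)^{n-k}`. -/
theorem attrition_step_preserves_binomial_marginal
    (n : ℕ) (pt ps σ : ℝ)
    (hpt : pt ∈ Set.Icc (0 : ℝ) 1) (hps : ps ∈ Set.Icc (0 : ℝ) 1)
    (hpt1 : pt < 1) (hσ : σ ∈ Set.Icc (0 : ℝ) 1)
    (β : ℝ) (hβdef : β = (ps - (1 - σ) * pt) / (1 - pt))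
    (hβ : β ∈ Set.Icc (0 : ℝ) 1) :
    ∀ k : ℕ,
      ∑ x ∈ Finset.range (n + 1), binomialPMF n pt x *
        ∑ j ∈ Finset.range (k + 1),
          binomialPMF x (1 - σ) j * binomialPMF (n - x) β (k - j)
        = binomialPMF n ps k :=
  attrition_step_preserves_binomial_marginal_general n pt ps σ hpt1 β hβdef
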